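/- For every point P = (ρ₁ e^{iθ₁}, ρ₂ e^{iθ₂}) ∈ ℂ² with ρ₁, ρ₂ ≥ 0 and θ₁, θ₂ ∈ ℝ, the squared Euclidean distance from P to Γ equals dist(P, Γ)² = inf_{ρ > 0} [ (1/2)ρ² + (1/2)ρ^{−2} + ρ₁² + ρ₂² − √2 · √( ρ₁²ρ² + ρ₂²ρ^{−2} + 2ρ₁ρ₂ cos(θ₁ − θ₂) ) ]. -/

import Mathlib

/- STATEMENT 5: formula for the squared distance from an arbitrary point to Γ. -/

noncomputable section

open Complex Metric
open scoped Real

/-- ℂ² with the Euclidean (ℝ⁴) distance. -/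
abbrev C2 : Type := EuclideanSpace ℂ (Fin 2)

/-- The point (z, w) ∈ ℂ². -/
def pt (z w : ℂ) : C2 := (WithLp.equiv 2 (Fin 2 → ℂ)).symm ![z, w]

/-- The point of Γ with parameters (ρ, θ). -/
def gpt (ρ θ : ℝ) : C2 :=
  pt (((Real.sqrt 2 / 2 * ρ : ℝ) : ℂ) * Complex.exp ((θ : ℂ) * Complex.I))
     (((Real.sqrt 2 / 2 * ρ⁻¹ : ℝ) : ℂ) * Complex.exp ((θ : ℂ) * Complex.I))

/-- The special Lagrangian surface Γ ⊂ ℂ². -/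
def Gam : Set C2 := {p | ∃ ρ θ : ℝ, 0 < ρ ∧ p = gpt ρ θ}

/-- The point (ρ₁ e^{iθ₁}, ρ₂ e^{iθ₂}) ∈ ℂ². -/
def ppt (ρ₁ θ₁ ρ₂ θ₂ : ℝ) : C2 :=
  pt ((ρ₁ : ℂ) * Complex.exp ((θ₁ : ℂ) * Complex.I))
     ((ρ₂ : ℂ) * Complex.exp ((θ₂ : ℂ) * Complex.I))

/-! Write a point of Γ as (a e^{iθ}, b e^{iθ}) with a = ρ/√2, b = 1/(√2 ρ). For P = (z, w) the
squared distance is ρ²/2 + ρ⁻²/2 + |z|² + |w|² − √2 Re((ρ z + ρ⁻¹ w) e^{−iθ}), so minimising over the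
common phase θ (attained at θ = arg (ρ z + ρ⁻¹ w)) replaces the real part by |ρ z + ρ⁻¹ w|, whose square
is ρ₁²ρ² + ρ₂²ρ⁻² + 2ρ₁ρ₂ cos(θ₁ − θ₂). The infimum over ρ > 0 is what remains. -/

theorem Metric.infDist_sq_eq_sInf_of_isLeast {α ι κ : Type*} [PseudoMetricSpace α] (x : α)
    (F : ι → κ → α) (p : ι → Prop) (g : ι → ℝ) (hp : ∃ i, p i)
    (hg : ∀ i, p i → IsLeast (Set.range fun j => dist x (F i j) ^ 2) (g i)) :
    infDist x {y | ∃ i j, p i ∧ y = F i j} ^ 2 = sInf {v | ∃ i, p i ∧ v = g i} := by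
  set s := {y | ∃ i j, p i ∧ y = F i j}
  obtain ⟨i₀, hi₀⟩ := hp
  obtain ⟨⟨j₀, -⟩, -⟩ := hg i₀ hi₀
  symm
  refine IsGLB.csInf_eq ?_ ⟨g i₀, i₀, hi₀, rfl⟩
  refine ⟨?_, fun b hb => ?_⟩
  · rintro _ ⟨i, hi, rfl⟩
    obtain ⟨⟨j, hj⟩, -⟩ := hg i hi
    rw [← hj]
    have hmem : F i j ∈ s := ⟨i, j, hi, rfl⟩
    exact pow_le_pow_left₀ infDist_nonneg (infDist_le_dist_of_mem hmem) 2
  · have hs : s.Nonempty := ⟨F i₀ j₀, i₀, j₀, hi₀, rfl⟩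
    have hb : √b ≤ infDist x s := by
      refine (le_infDist hs).2 ?_
      rintro _ ⟨i, j, hi, rfl⟩
      exact Real.sqrt_le_iff.2 ⟨dist_nonneg, (hb ⟨i, hi, rfl⟩).trans ((hg i hi).2 ⟨j, rfl⟩)⟩
    exact (Real.sqrt_le_iff.1 hb).2

namespace Complex

theorem norm_sub_ofReal_mul_exp_sq (z : ℂ) (a θ : ℝ) :
    ‖z - a * cexp (θ * I)‖ ^ 2 = ‖z‖ ^ 2 + a ^ 2 - 2 * a * (z * cexp (-(θ * I))).re := by
  rw [Complex.sq_norm (z - _), normSq_sub, normSq_eq_norm_sq, normSq_eq_norm_sq, norm_mul,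
    norm_exp_ofReal_mul_I, norm_real, Real.norm_eq_abs, mul_one, sq_abs, map_mul, conj_ofReal,
    ← exp_conj, map_mul, conj_ofReal, conj_I, mul_neg, mul_left_comm, re_ofReal_mul]
  ring

theorem re_mul_exp_neg_le_norm (c : ℂ) (θ : ℝ) : (c * cexp (-(θ * I))).re ≤ ‖c‖ := by
  refine (re_le_norm _).trans_eq ?_
  rw [norm_mul, ← neg_mul, ← ofReal_neg, norm_exp_ofReal_mul_I, mul_one]

theorem mul_exp_neg_arg_mul_I (c : ℂ) : c * cexp (-(arg c * I)) = ‖c‖ := by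
  conv_lhs => arg 1; rw [← norm_mul_exp_arg_mul_I c]
  rw [mul_assoc, ← exp_add, add_neg_cancel, exp_zero, mul_one]

theorem norm_ofReal_mul_exp_add_sq (a b θ₁ θ₂ : ℝ) :
    ‖a * cexp (θ₁ * I) + b * cexp (θ₂ * I)‖ ^ 2 = a ^ 2 + b ^ 2 + 2 * a * b * Real.cos (θ₁ - θ₂) := by
  rw [Complex.sq_norm, normSq_apply]
  simp only [add_re, add_im, mul_re, mul_im, ofReal_re, ofReal_im, exp_ofReal_mul_I_re,
    exp_ofReal_mul_I_im, Real.cos_sub]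
  linear_combination a ^ 2 * Real.sin_sq_add_cos_sq θ₁ + b ^ 2 * Real.sin_sq_add_cos_sq θ₂

end Complex

theorem dist_pt_pt_sq (z w z' w' : ℂ) : dist (pt z w) (pt z' w') ^ 2 = ‖z - z'‖ ^ 2 + ‖w - w'‖ ^ 2 := by
  rw [EuclideanSpace.dist_eq, Real.sq_sqrt (by positivity), Fin.sum_univ_two, Complex.dist_eq,
    Complex.dist_eq]
  rfl

theorem dist_pt_gpt_sq (z w : ℂ) (ρ θ : ℝ) :
    dist (pt z w) (gpt ρ θ) ^ 2 = 1 / 2 * ρ ^ 2 + 1 / 2 * (ρ ^ 2)⁻¹ + ‖z‖ ^ 2 + ‖w‖ ^ 2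
      - √2 * ((ρ * z + ρ⁻¹ * w) * cexp (-(θ * I))).re := by
  have h2 : √2 ^ 2 = 2 := Real.sq_sqrt (by norm_num)
  rw [gpt, dist_pt_pt_sq, Complex.norm_sub_ofReal_mul_exp_sq, Complex.norm_sub_ofReal_mul_exp_sq]
  simp only [add_mul, Complex.add_re, Complex.re_ofReal_mul, mul_assoc]
  linear_combination (ρ ^ 2 + (ρ ^ 2)⁻¹) / 4 * h2

theorem isLeast_dist_pt_gpt_sq (z w : ℂ) (ρ : ℝ) :
    IsLeast (Set.range fun θ => dist (pt z w) (gpt ρ θ) ^ 2)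
      (1 / 2 * ρ ^ 2 + 1 / 2 * (ρ ^ 2)⁻¹ + ‖z‖ ^ 2 + ‖w‖ ^ 2 - √2 * ‖ρ * z + ρ⁻¹ * w‖) := by
  refine ⟨⟨arg (ρ * z + ρ⁻¹ * w), ?_⟩, ?_⟩
  · beta_reduce
    rw [dist_pt_gpt_sq, Complex.mul_exp_neg_arg_mul_I, Complex.ofReal_re]
  · rintro _ ⟨θ, rfl⟩
    beta_reduce
    rw [dist_pt_gpt_sq]
    gcongr
    exact Complex.re_mul_exp_neg_le_norm _ θ

theorem sq_dist_to_Gamma_general (ρ₁ ρ₂ θ₁ θ₂ : ℝ) :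
    (Metric.infDist (ppt ρ₁ θ₁ ρ₂ θ₂) Gam) ^ 2
      = sInf {v : ℝ | ∃ ρ : ℝ, 0 < ρ ∧
          v = (1/2) * ρ ^ 2 + (1/2) * (ρ ^ 2)⁻¹ + ρ₁ ^ 2 + ρ₂ ^ 2
            - Real.sqrt 2 * Real.sqrt (ρ₁ ^ 2 * ρ ^ 2 + ρ₂ ^ 2 * (ρ ^ 2)⁻¹
                + 2 * ρ₁ * ρ₂ * Real.cos (θ₁ - θ₂))} := by
  refine infDist_sq_eq_sInf_of_isLeast _ gpt _ _ ⟨1, one_pos⟩ fun ρ hρ => ?_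
  have hnorm : ∀ a θ : ℝ, ‖(a : ℂ) * cexp (θ * I)‖ ^ 2 = a ^ 2 := by
    simp [Complex.norm_exp_ofReal_mul_I]
  have hsum : ‖ρ * (ρ₁ * cexp (θ₁ * I)) + ρ⁻¹ * (ρ₂ * cexp (θ₂ * I))‖ ^ 2
      = ρ₁ ^ 2 * ρ ^ 2 + ρ₂ ^ 2 * (ρ ^ 2)⁻¹ + 2 * ρ₁ * ρ₂ * Real.cos (θ₁ - θ₂) := by
    rw [← mul_assoc, ← mul_assoc, ← ofReal_mul, ← ofReal_mul,
      Complex.norm_ofReal_mul_exp_add_sq]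
    field_simp
  convert isLeast_dist_pt_gpt_sq (ρ₁ * cexp (θ₁ * I)) (ρ₂ * cexp (θ₂ * I)) ρ using 1
  · rfl
  · rw [hnorm, hnorm, ← hsum, Real.sqrt_sq (norm_nonneg _)]

/-- The squared distance from P = (ρ₁ e^{iθ₁}, ρ₂ e^{iθ₂}) to Γ is the infimum
over ρ > 0 of the explicit expression. -/
theorem sq_dist_to_Gamma (ρ₁ ρ₂ θ₁ θ₂ : ℝ) (h1 : 0 ≤ ρ₁) (h2 : 0 ≤ ρ₂) :
    (Metric.infDist (ppt ρ₁ θ₁ ρ₂ θ₂) Gam) ^ 2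
      = sInf {v : ℝ | ∃ ρ : ℝ, 0 < ρ ∧
          v = (1/2) * ρ ^ 2 + (1/2) * (ρ ^ 2)⁻¹ + ρ₁ ^ 2 + ρ₂ ^ 2
            - Real.sqrt 2 * Real.sqrt (ρ₁ ^ 2 * ρ ^ 2 + ρ₂ ^ 2 * (ρ ^ 2)⁻¹
                + 2 * ρ₁ * ρ₂ * Real.cos (θ₁ - θ₂))} :=
  sq_dist_to_Gamma_general ρ₁ ρ₂ θ₁ θ₂

end
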